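/- arXiv:1301.5738 — 6 statements merged into one kernel-verified Lean document; each statement's English description precedes it below -/
import Mathlib

section
/- If a point x in the extended strategy space lies in the interior (relative to S) of the best response region R_i, then x does not lie in R_j for any j ≠ i; equivalently, distinct best response regions have disjoint relative interiors, provided the payoff functions x ↦ (Mx)_i are pairwise distinct affine functions on S. -/
/-!
At a point `x` of `R i ∩ R j` the payoff gap `y ↦ (M y) i - (M y) j` vanishes. It is affine and
not identically zero on `S`, so along the line from `x` to a point `z ∈ S` where it is nonzero it
becomes negative arbitrarily close to `x`: there `j` beats `i`, so no neighbourhood of `x` in `S`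
lies in `R i`.
-/

open AffineMap Filter Topology

theorem AffineMap.exists_dist_lineMap_lt_and_apply_neg {V P : Type*} [SeminormedAddCommGroup V]
    [NormedSpace ℝ V] [PseudoMetricSpace P] [NormedAddTorsor V P] (f : P →ᵃ[ℝ] ℝ) {x z : P}
    (hx : f x = 0) (hz : f z ≠ 0) {ε : ℝ} (hε : 0 < ε) :
    ∃ t : ℝ, dist (lineMap x z t) x < ε ∧ f (lineMap x z t) < 0 := by
  have hlim : Tendsto (fun s : ℝ => lineMap x z (-f z * s)) (𝓝[>] 0) (𝓝 x) := by
    have hcont : Continuous fun s : ℝ => lineMap x z (-f z * s) :=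
      lineMap_continuous.comp (continuous_const.mul continuous_id)
    simpa using (hcont.tendsto 0).mono_left nhdsWithin_le_nhds
  obtain ⟨s, hs, hspos⟩ :=
    ((hlim.eventually (Metric.ball_mem_nhds x hε)).and self_mem_nhdsWithin).exists
  refine ⟨-f z * s, hs, ?_⟩
  have hspos : (0 : ℝ) < s := hspos
  calc f (lineMap x z (-f z * s)) = -(f z ^ 2 * s) := by
        rw [f.apply_lineMap, hx, lineMap_apply_ring']; ring
    _ < 0 := neg_neg_of_pos (mul_pos (sq_pos_of_ne_zero hz) hspos)

theorem sum_lineMap_eq_one {ι : Type*} [Fintype ι] {x z : ι → ℝ} (hx : ∑ m, x m = 1)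
    (hz : ∑ m, z m = 1) (t : ℝ) : ∑ m, lineMap x z t m = 1 := by
  simp only [lineMap_apply_module, Pi.add_apply, Pi.smul_apply, smul_eq_mul,
    Finset.sum_add_distrib, ← Finset.mul_sum, hx, hz]
  ring

theorem stmt_2_general (k : ℕ) (M : Matrix (Fin k) (Fin k) ℝ)
    (hdistinct : ∀ i j : Fin k, i ≠ j →
      ∃ x : Fin k → ℝ, (∑ m, x m) = 1 ∧ M.mulVec x i ≠ M.mulVec x j)
    (i j : Fin k) (hij : i ≠ j) (x : Fin k → ℝ)
    (hxS : (∑ m, x m) = 1)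
    (hxRi : ∀ m : Fin k, M.mulVec x m ≤ M.mulVec x i)
    (hrelint : ∃ ε > (0 : ℝ), ∀ y : Fin k → ℝ, (∑ m, y m) = 1 → dist y x < ε →
      ∀ m : Fin k, M.mulVec y m ≤ M.mulVec y i) :
    ¬ (∀ m : Fin k, M.mulVec x m ≤ M.mulVec x j) := by
  intro hxRj
  obtain ⟨ε, hε, hball⟩ := hrelint
  obtain ⟨z, hzS, hzij⟩ := hdistinct i j hij
  let payoffGap : (Fin k → ℝ) →ᵃ[ℝ] ℝ :=
    ((LinearMap.proj (R := ℝ) (φ := fun _ : Fin k => ℝ) i - LinearMap.proj j) ∘ₗ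
      M.mulVecLin).toAffineMap
  have hgap : ∀ y, payoffGap y = M.mulVec y i - M.mulVec y j := fun _ => rfl
  obtain ⟨t, hdist, hneg⟩ := payoffGap.exists_dist_lineMap_lt_and_apply_neg
    (by rw [hgap, sub_eq_zero]; exact le_antisymm (hxRj i) (hxRi j))
    (by rwa [hgap, sub_ne_zero]) hε
  rw [hgap, sub_neg] at hneg
  exact (hball _ (sum_lineMap_eq_one hxS hzS t) hdist j).not_gt hneg

/-- a point in the relative interior (w.r.t. the extended strategy
space `S = {x | ∑ x = 1}`) of a best response region `R i` lies in no other best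
response region, provided the payoff functionals are pairwise distinct on `S`. -/
theorem stmt_2 (k : ℕ) (hk : 1 ≤ k) (M : Matrix (Fin k) (Fin k) ℝ)
    (hdistinct : ∀ i j : Fin k, i ≠ j →
      ∃ x : Fin k → ℝ, (∑ m, x m) = 1 ∧ M.mulVec x i ≠ M.mulVec x j)
    (i j : Fin k) (hij : i ≠ j) (x : Fin k → ℝ)
    (hxS : (∑ m, x m) = 1)
    (hxRi : ∀ m : Fin k, M.mulVec x m ≤ M.mulVec x i)
    (hrelint : ∃ ε > (0 : ℝ), ∀ y : Fin k → ℝ, (∑ m, y m) = 1 → dist y x < ε →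
      ∀ m : Fin k, M.mulVec y m ≤ M.mulVec y i) :
    ¬ (∀ m : Fin k, M.mulVec x m ≤ M.mulVec x j) :=
  stmt_2_general k M hdistinct i j hij x hxS hxRi hrelint
end

section
/- Let X, Y be disjoint finite sets of unordered pairs (allowing repeated elements, i.e. edges and self-loops) over a finite set S of vertices, viewed as a two-colored multigraph Gr(X,Y) with dark edges X and light edges Y. If there exist nonnegative weights λ : X → ℝ≥0 and μ : Y → ℝ≥0, not all zero, such that at every vertex v the total λ-weight of dark edges incident to v equals the total μ-weight of light edges incident to v (self-loops counted twice), then Gr(X,Y) contains an alternating closed walk: a closed walk in which consecutive edges alternate between X and Y (including at the return to the start). -/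
/-- An alternating closed walk in the two-coloured multigraph with dark edge set
`X` and light edge set `Y` (edges are size-2 multisets, so self-loops are
allowed): a closed walk of even length whose edges alternate between `X` and
`Y`, including at the return to the start. -/
def IsAltClosedWalk {S : Type*} [DecidableEq S] (X Y : Finset (Multiset S)) : Prop :=
  ∃ m : ℕ, 0 < m ∧ ∃ v : ℕ → S, v (2 * m) = v 0 ∧
    ∀ i < 2 * m, ({v i, v (i + 1)} : Multiset S) ∈ (if i % 2 = 0 then X else Y)

/-!
Call a vertex active if some dark edge of positive weight is incident to it. By the balance
condition the weighted dark and light degrees of every vertex agree, so a vertex is active iff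
some light edge of positive weight is incident to it. Starting from an active vertex one can
therefore always leave along a positive dark edge and then along a positive light edge, landing
on an active vertex again. Since `S` is finite, this infinite alternating walk revisits a vertex
at an even position, which closes an alternating closed walk.
-/

open Finset

theorem Multiset.exists_eq_pair_of_mem {α : Type*} {e : Multiset α} (he : Multiset.card e = 2)
    {v : α} (hv : v ∈ e) : ∃ u, e = {v, u} := by
  obtain ⟨a, b, rfl⟩ := Multiset.card_eq_two.mp he
  rcases Multiset.mem_cons.mp hv with rfl | hb
  · exact ⟨b, rfl⟩
  · rw [Multiset.mem_singleton.mp hb]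
    exact ⟨a, Multiset.pair_comm _ _⟩

section AltClosedWalk

variable {S : Type*} [DecidableEq S] {X Y : Finset (Multiset S)}

theorem isAltClosedWalk_of_seq (a b : ℕ → S) (hX : ∀ n, ({a n, b n} : Multiset S) ∈ X)
    (hY : ∀ n, ({b n, a (n + 1)} : Multiset S) ∈ Y) {m : ℕ} (hm : 0 < m) (ham : a m = a 0) :
    IsAltClosedWalk X Y := by
  refine ⟨m, hm, fun t => if t % 2 = 0 then a (t / 2) else b (t / 2), ?_, fun t _ => ?_⟩
  · simp [ham]
  · rcases Nat.even_or_odd' t with ⟨k, rfl | rfl⟩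
    · simpa [Nat.add_mod, Nat.add_div] using hX k
    · have h₀ : (2 * k + 1) / 2 = k := by omega
      have h₁ : (2 * k + 1 + 1) / 2 = k + 1 := by omega
      simpa [Nat.add_mod, h₀, h₁] using hY k

theorem isAltClosedWalk_of_forall_exists_step [Finite S] (A : S → Prop) (h₀ : ∃ v, A v)
    (hstep : ∀ v, A v → ∃ w u, ({v, w} : Multiset S) ∈ X ∧ ({w, u} : Multiset S) ∈ Y ∧ A u) :
    IsAltClosedWalk X Y := by
  obtain ⟨v₀, hv₀⟩ := h₀
  choose W U hWU using fun v : {v // A v} => hstep v.1 v.2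
  let orbit : ℕ → {v // A v} := fun n => (fun v => ⟨U v, (hWU v).2.2⟩)^[n] ⟨v₀, hv₀⟩
  obtain ⟨i, j, hij, hsame⟩ :=
    Set.finite_univ.exists_lt_map_eq_of_forall_mem (f := orbit) fun _ => Set.mem_univ _
  refine isAltClosedWalk_of_seq (fun n => (orbit (i + n)).1) (fun n => W (orbit (i + n)))
    (fun n => (hWU _).1) (fun n => ?_) (Nat.sub_pos_of_lt hij) ?_
  · simp only [orbit, ← add_assoc, Function.iterate_succ_apply']
    exact (hWU _).2.1
  · simp [Nat.add_sub_cancel' hij.le, hsame]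

end AltClosedWalk

section WeightedDegree

variable {S : Type*} [DecidableEq S]

def weightedDegree (E : Finset (Multiset S)) (w : Multiset S → ℝ) (v : S) : ℝ :=
  ∑ e ∈ E, w e * (e.count v : ℝ)

variable {E : Finset (Multiset S)} {w : Multiset S → ℝ}

theorem weightedDegree_pos_iff (hw : ∀ e ∈ E, 0 ≤ w e) (v : S) :
    0 < weightedDegree E w v ↔ ∃ e ∈ E, 0 < w e ∧ v ∈ e := by
  have hterm : ∀ e ∈ E, 0 ≤ w e * (e.count v : ℝ) :=
    fun e he => mul_nonneg (hw e he) (Nat.cast_nonneg _)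
  simp only [weightedDegree, Finset.sum_pos_iff_of_nonneg hterm, ← Multiset.count_pos]
  refine exists_congr fun e => and_congr_right fun he => ?_
  rw [← Nat.cast_pos (α := ℝ)]
  exact ⟨fun h => ⟨pos_of_mul_pos_left h (Nat.cast_nonneg _), pos_of_mul_pos_right h (hw e he)⟩,
    fun h => mul_pos h.1 h.2⟩

theorem exists_pair_mem_of_weightedDegree_pos (hw : ∀ e ∈ E, 0 ≤ w e)
    (hcard : ∀ e ∈ E, Multiset.card e = 2) {v : S} (hv : 0 < weightedDegree E w v) :
    ∃ u, ({v, u} : Multiset S) ∈ E ∧ 0 < weightedDegree E w u := by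
  obtain ⟨e, he, hpos, hve⟩ := (weightedDegree_pos_iff hw v).mp hv
  obtain ⟨u, rfl⟩ := Multiset.exists_eq_pair_of_mem (hcard e he) hve
  exact ⟨u, he, (weightedDegree_pos_iff hw u).mpr ⟨_, he, hpos, by simp⟩⟩

theorem exists_weightedDegree_pos (hw : ∀ e ∈ E, 0 ≤ w e) (hcard : ∀ e ∈ E, Multiset.card e = 2)
    (hnz : ∃ e ∈ E, w e ≠ 0) : ∃ v, 0 < weightedDegree E w v := by
  obtain ⟨e, he, hne⟩ := hnz
  obtain ⟨v, u, rfl⟩ := Multiset.card_eq_two.mp (hcard e he)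
  exact ⟨v, (weightedDegree_pos_iff hw v).mpr ⟨_, he, (hw _ he).lt_of_ne' hne, by simp⟩⟩

end WeightedDegree

theorem stmt_12_general (S : Type*) [Fintype S] [DecidableEq S]
    (X Y : Finset (Multiset S))
    (hcard : ∀ e ∈ X ∪ Y, Multiset.card e = 2)
    (lam mu : Multiset S → ℝ)
    (hlam : ∀ e ∈ X, 0 ≤ lam e) (hmu : ∀ e ∈ Y, 0 ≤ mu e)
    (hnz : (∃ e ∈ X, lam e ≠ 0) ∨ (∃ e ∈ Y, mu e ≠ 0))
    (hbal : ∀ v : S,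
      (∑ e ∈ X, lam e * (e.count v : ℝ)) = ∑ e ∈ Y, mu e * (e.count v : ℝ)) :
    IsAltClosedWalk X Y := by
  have hbal : ∀ v, weightedDegree X lam v = weightedDegree Y mu v := hbal
  have hX : ∀ e ∈ X, Multiset.card e = 2 := fun e he => hcard e (mem_union_left _ he)
  have hY : ∀ e ∈ Y, Multiset.card e = 2 := fun e he => hcard e (mem_union_right _ he)
  refine isAltClosedWalk_of_forall_exists_step (fun v => 0 < weightedDegree X lam v) ?_ ?_
  · rcases hnz with hnz | hnz
    · exact exists_weightedDegree_pos hlam hX hnz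
    · simpa only [hbal] using exists_weightedDegree_pos hmu hY hnz
  · intro v hv
    obtain ⟨w, hvw, hw⟩ := exists_pair_mem_of_weightedDegree_pos hlam hX hv
    obtain ⟨u, hwu, hu⟩ := exists_pair_mem_of_weightedDegree_pos hmu hY (hbal w ▸ hw)
    exact ⟨w, u, hvw, hwu, (hbal u).symm ▸ hu⟩

/-- if there are nonnegative, not-all-zero edge weights on the dark
and light edges that balance at every vertex (self-loops counted twice), then
the multigraph contains an alternating closed walk. -/
theorem stmt_12 (S : Type*) [Fintype S] [DecidableEq S]
    (X Y : Finset (Multiset S)) (hXY : Disjoint X Y)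
    (hcard : ∀ e ∈ X ∪ Y, Multiset.card e = 2)
    (lam mu : Multiset S → ℝ)
    (hlam : ∀ e ∈ X, 0 ≤ lam e) (hmu : ∀ e ∈ Y, 0 ≤ mu e)
    (hnz : (∃ e ∈ X, lam e ≠ 0) ∨ (∃ e ∈ Y, mu e ≠ 0))
    (hbal : ∀ v : S,
      (∑ e ∈ X, lam e * (e.count v : ℝ)) = ∑ e ∈ Y, mu e * (e.count v : ℝ)) :
    IsAltClosedWalk X Y :=
  stmt_12_general S X Y hcard lam mu hlam hmu hnz hbal
end

section
/- Let X, Y be disjoint finite sets of unordered pairs over a finite strategy set S = Fin k. If the two-colored multigraph Gr(X,Y) contains an alternating closed walk (consecutive edges alternating between X and Y, cyclically), then the convex hulls of the point sets {(e(a)+e(b))/2 : {a,b} ∈ X} and {(e(a)+e(b))/2 : {a,b} ∈ Y} in ℝ^k intersect. -/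
/-- The point of the simplex associated with an edge `{a, b}`:
`(e(a) + e(b)) / 2`. -/
noncomputable def edgePoint {k : ℕ} (e : Multiset (Fin k)) : Fin k → ℝ :=
  (2 : ℝ)⁻¹ • (e.map (fun s => Pi.single s (1 : ℝ))).sum

/-!
Along an alternating closed walk `v 0, v 1, …, v (2m) = v 0` the dark edges are
`{v (2j), v (2j+1)}` and the light edges `{v (2j+1), v (2j+2)}`, for `j < m`. Summing
`e(a) + e(b)` over either family counts each visit `v i`, `i < 2m`, exactly once, because
`v (2m) = v 0`. So the barycentres of the `m` dark and of the `m` light edge points coincide.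
-/

open Finset

theorem Finset.sum_range_two_mul {M : Type*} [AddCommMonoid M] (m : ℕ) (g : ℕ → M) :
    ∑ i ∈ range (2 * m), g i = ∑ j ∈ range m, (g (2 * j) + g (2 * j + 1)) := by
  induction m with
  | zero => simp
  | succ m ih => rw [Nat.mul_succ, sum_range_succ, sum_range_succ, ih, sum_range_succ, add_assoc]

theorem Finset.sum_range_shift_of_apply_eq {M : Type*} [AddCancelCommMonoid M] {n : ℕ}
    {g : ℕ → M} (h : g n = g 0) : ∑ i ∈ range n, g (i + 1) = ∑ i ∈ range n, g i := by
  apply add_right_cancel (b := g 0)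
  rw [← sum_range_succ' g, sum_range_succ, h]

theorem Finset.sum_range_pairs_eq_shifted_pairs {M : Type*} [AddCancelCommMonoid M] {m : ℕ}
    {g : ℕ → M} (h : g (2 * m) = g 0) :
    ∑ j ∈ range m, (g (2 * j) + g (2 * j + 1)) =
      ∑ j ∈ range m, (g (2 * j + 1) + g (2 * j + 2)) := by
  rw [← sum_range_two_mul, ← sum_range_shift_of_apply_eq h, sum_range_two_mul]

theorem exists_mem_convexHull_inter_of_sum_eq {ι E : Type*} [AddCommGroup E] [Module ℝ E]
    {s t : Set E} {I : Finset ι} (hI : I.Nonempty) {x y : ι → E} (hx : ∀ i ∈ I, x i ∈ s)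
    (hy : ∀ i ∈ I, y i ∈ t) (hxy : ∑ i ∈ I, x i = ∑ i ∈ I, y i) :
    ∃ p : E, p ∈ convexHull ℝ s ∧ p ∈ convexHull ℝ t := by
  have hw₀ : ∀ i ∈ I, (0 : ℝ) ≤ 1 := fun _ _ => zero_le_one
  have hw : (0 : ℝ) < ∑ _i ∈ I, (1 : ℝ) := by simpa using hI
  have hcentre : I.centerMass (fun _ => (1 : ℝ)) x = I.centerMass (fun _ => (1 : ℝ)) y := by
    simp only [centerMass, one_smul, hxy]
  exact ⟨_, I.centerMass_mem_convexHull hw₀ hw hx,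
    hcentre ▸ I.centerMass_mem_convexHull hw₀ hw hy⟩

theorem edgePoint_pair {k : ℕ} (a b : Fin k) :
    edgePoint ({a, b} : Multiset (Fin k)) = (2 : ℝ)⁻¹ • (Pi.single a 1 + Pi.single b 1) := by
  simp [edgePoint]

theorem stmt_13_general (k : ℕ) (X Y : Finset (Multiset (Fin k)))
    (hwalk : IsAltClosedWalk X Y) :
    ∃ p : Fin k → ℝ, p ∈ convexHull ℝ (edgePoint '' (X : Set (Multiset (Fin k)))) ∧
      p ∈ convexHull ℝ (edgePoint '' (Y : Set (Multiset (Fin k)))) := by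
  obtain ⟨m, hm, v, hclosed, hedge⟩ := hwalk
  refine exists_mem_convexHull_inter_of_sum_eq (I := range m) (nonempty_range_iff.2 hm.ne')
    (x := fun j => edgePoint {v (2 * j), v (2 * j + 1)})
    (y := fun j => edgePoint {v (2 * j + 1), v (2 * j + 2)}) ?_ ?_ ?_
  · intro j hj
    have hX := hedge (2 * j) (by rw [mem_range] at hj; omega)
    rw [if_pos (Nat.mul_mod_right 2 j)] at hX
    exact Set.mem_image_of_mem _ hX
  · intro j hj
    have hY := hedge (2 * j + 1) (by rw [mem_range] at hj; omega)
    rw [if_neg (by omega)] at hY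
    exact Set.mem_image_of_mem _ hY
  · simp only [edgePoint_pair, ← smul_sum]
    exact congrArg _ (sum_range_pairs_eq_shifted_pairs (g := fun i => Pi.single (v i) 1)
      (by rw [hclosed]))

/-- an alternating closed walk forces the convex hulls of the dark
and light edge-point sets to intersect. -/
theorem stmt_13 (k : ℕ) (X Y : Finset (Multiset (Fin k))) (hXY : Disjoint X Y)
    (hcard : ∀ e ∈ X ∪ Y, Multiset.card e = 2)
    (hwalk : IsAltClosedWalk X Y) :
    ∃ p : Fin k → ℝ, p ∈ convexHull ℝ (edgePoint '' (X : Set (Multiset (Fin k)))) ∧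
      p ∈ convexHull ℝ (edgePoint '' (Y : Set (Multiset (Fin k)))) :=
  stmt_13_general k X Y hwalk
end

section
/- In the two-colored multigraph consisting of a single cycle of even length n ≥ 4 whose edges alternate in color around the cycle, the cycle itself is an alternating closed walk; however, if a connected two-colored multigraph with minimum degree ≥ 2 (counting loops twice) contains no even cycle and at most one odd cycle, it contains no alternating closed walk. -/
/-- `v` describes a cycle of length `n` in the multigraph with edge set `E`:
a closed walk on pairwise distinct vertices (a loop for `n = 1`; parallel edges
cannot arise since edges form a set, so otherwise `n ≥ 3`). -/
def IsCycleOn {S : Type*} [DecidableEq S] (E : Finset (Multiset S)) (n : ℕ)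
    (v : ℕ → S) : Prop :=
  (n = 1 ∨ 3 ≤ n) ∧ (∀ i < n, ∀ j < n, v i = v j → i = j) ∧ v n = v 0 ∧
    ∀ i < n, ({v i, v (i + 1)} : Multiset S) ∈ E

/-- The edge set of a cycle. -/
def cycleEdges {S : Type*} [DecidableEq S] (n : ℕ) (v : ℕ → S) :
    Set (Multiset S) :=
  {e | ∃ i < n, e = ({v i, v (i + 1)} : Multiset S)}

theorem Multiset.pair_eq_pair_iff {α : Type*} {a b c d : α} :
    ({a, b} : Multiset α) = {c, d} ↔ a = c ∧ b = d ∨ a = d ∧ b = c := by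
  refine ⟨fun h => ?_, ?_⟩
  · rcases Multiset.cons_eq_cons.1 h with ⟨rfl, hbd⟩ | ⟨-, cs, h₁, h₂⟩
    · exact .inl ⟨rfl, Multiset.singleton_inj.1 hbd⟩
    · simp_all [Multiset.singleton_eq_cons_iff]
  · rintro (⟨rfl, rfl⟩ | ⟨rfl, rfl⟩)
    · rfl
    · exact Multiset.pair_comm _ _

section ClosedWalks

variable {S : Type*}

theorem exists_simple_closed_subwalk {n : ℕ} {w : ℕ → S} (hn : 0 < n) (hw : w n = w 0) :
    ∃ a g, 0 < g ∧ a + g ≤ n ∧ w (a + g) = w a ∧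
      ∀ p < g, ∀ q < g, w (a + p) = w (a + q) → p = q := by
  classical
  have hex : ∃ g, 0 < g ∧ ∃ a, a + g ≤ n ∧ w (a + g) = w a :=
    ⟨n, hn, 0, by simpa using hw⟩
  obtain ⟨hg, a, hag, hclosed⟩ := Nat.find_spec hex
  refine ⟨a, _, hg, hag, hclosed, fun p hp q hq hpq => ?_⟩
  wlog hpq' : p ≤ q generalizing p q
  · exact (this q hq p hp hpq.symm (by omega)).symm
  by_contra hne
  -- a repetition at distance `q - p` is a shorter closed subwalk
  refine Nat.find_min hex (m := q - p) (by omega) ⟨by omega, a + p, by omega, ?_⟩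
  rw [show a + p + (q - p) = a + q by omega, hpq]

theorem cycleEdges_subwalk_subset [DecidableEq S] {n a g : ℕ} {w : ℕ → S} (h : a + g ≤ n) :
    cycleEdges g (fun k => w (a + k)) ⊆ cycleEdges n w := by
  rintro e ⟨k, hk, rfl⟩
  exact ⟨a + k, by omega, by simp only [Nat.add_assoc]⟩

theorem isCycleOn_subwalk [DecidableEq S] {E : Finset (Multiset S)} {a g : ℕ} {w : ℕ → S}
    (hg : g = 1 ∨ 3 ≤ g) (hinj : ∀ p < g, ∀ q < g, w (a + p) = w (a + q) → p = q)
    (hclosed : w (a + g) = w a) (hE : cycleEdges g (fun k => w (a + k)) ⊆ E) :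
    IsCycleOn E g (fun k => w (a + k)) :=
  ⟨hg, hinj, by simpa using hclosed, fun k hk => hE ⟨k, hk, rfl⟩⟩

/-- The closed walk `w` with its closed subwalk from `a` to `a + g` cut out. -/
def shortcut (w : ℕ → S) (a g : ℕ) : ℕ → S := fun k => if k < a then w k else w (k + g)

theorem shortcut_closed {n a g : ℕ} {w : ℕ → S} (hw : w n = w 0) (hclosed : w (a + g) = w a)
    (h : a + g ≤ n) : shortcut w a g (n - g) = shortcut w a g 0 := by
  rcases Nat.eq_zero_or_pos a with rfl | ha
  · simp [shortcut, Nat.sub_add_cancel (show g ≤ n by omega), hw, ← hclosed]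
  · simp [shortcut, ha, show ¬ n - g < a by omega, Nat.sub_add_cancel (show g ≤ n by omega), hw]

theorem mem_cycleEdges_shortcut [DecidableEq S] {n a g : ℕ} {w : ℕ → S} {e : Multiset S}
    (hclosed : w (a + g) = w a) (h : a + g ≤ n) (he : e ∈ cycleEdges (n - g) (shortcut w a g)) :
    ∃ q < n, (q < a ∨ a + g ≤ q) ∧ e = {w q, w (q + 1)} := by
  obtain ⟨k, hk, rfl⟩ := he
  by_cases hka : k < a
  · refine ⟨k, by omega, .inl hka, ?_⟩
    by_cases hk1 : k + 1 < a
    · simp [shortcut, hka, hk1]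
    · simp [shortcut, hka, show k + 1 = a by omega, hclosed]
  · refine ⟨k + g, by omega, .inr (by omega), ?_⟩
    simp [shortcut, hka, show ¬ k + 1 < a by omega, Nat.add_right_comm k 1 g]

theorem cycleEdges_shortcut_subset [DecidableEq S] {n a g : ℕ} {w : ℕ → S}
    (hclosed : w (a + g) = w a) (h : a + g ≤ n) :
    cycleEdges (n - g) (shortcut w a g) ⊆ cycleEdges n w := fun _ he =>
  let ⟨q, hq, _, he⟩ := mem_cycleEdges_shortcut hclosed h he
  ⟨q, hq, he⟩

theorem exists_odd_cycle_of_closed_walk [DecidableEq S] {E : Finset (Multiset S)} {n : ℕ}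
    {w : ℕ → S} (hn : n % 2 = 1) (hw : w n = w 0) (hE : cycleEdges n w ⊆ E) :
    ∃ k u, k % 2 = 1 ∧ IsCycleOn E k u ∧ cycleEdges k u ⊆ cycleEdges n w := by
  induction n using Nat.strong_induction_on generalizing w with
  | _ n ih =>
  obtain ⟨a, g, hg, hag, hclosed, hinj⟩ := exists_simple_closed_subwalk (by omega) hw
  have hsub := cycleEdges_subwalk_subset (w := w) hag
  rcases Nat.mod_two_eq_zero_or_one g with hgeven | hgodd
  · have hcut := cycleEdges_shortcut_subset hclosed hag
    obtain ⟨k, u, hk, hu, hku⟩ :=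
      ih (n - g) (by omega) (by omega) (shortcut_closed hw hclosed hag) (hcut.trans hE)
    exact ⟨k, u, hk, hu, hku.trans hcut⟩
  · exact ⟨g, _, hgodd, isCycleOn_subwalk (by omega) hinj hclosed (hsub.trans hE), hsub⟩

end ClosedWalks

section AlternatingWalks

variable {S : Type*} {X Y : Finset (Multiset S)} {m : ℕ} {v : ℕ → S}

def AltClosedWalk (X Y : Finset (Multiset S)) (m : ℕ) (v : ℕ → S) : Prop :=
  v (2 * m) = v 0 ∧
    ∀ i < 2 * m, ({v i, v (i + 1)} : Multiset S) ∈ (if i % 2 = 0 then X else Y)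

theorem AltClosedWalk.cycleEdges_subset [DecidableEq S] (hv : AltClosedWalk X Y m v) :
    cycleEdges (2 * m) v ⊆ ↑(X ∪ Y) := by
  rintro e ⟨i, hi, rfl⟩
  have := hv.2 i hi
  split_ifs at this
  exacts [Finset.mem_union_left _ this, Finset.mem_union_right _ this]

theorem AltClosedWalk.mod_two_eq_of_edge_eq (hdisj : Disjoint X Y) (hv : AltClosedWalk X Y m v)
    {p q : ℕ} (hp : p < 2 * m) (hq : q < 2 * m)
    (h : ({v p, v (p + 1)} : Multiset S) = {v q, v (q + 1)}) : p % 2 = q % 2 := by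
  have hp' := hv.2 p hp
  have hq' := hv.2 q hq
  rw [h] at hp'
  split_ifs at hp' hq' <;> first
    | omega
    | exact absurd hq' (Finset.disjoint_left.1 hdisj hp')
    | exact absurd hp' (Finset.disjoint_left.1 hdisj hq')

theorem AltClosedWalk.exists_shorter (hv : AltClosedWalk X Y m v) {a b : ℕ} (ha : a < 2 * m)
    (hb : b < 2 * m) (hne : a ≠ b) (hpar : a % 2 = b % 2) (hvab : v a = v b) :
    ∃ k, 0 < k ∧ k < m ∧ ∃ u, AltClosedWalk X Y k u ∨ AltClosedWalk Y X k u := by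
  wlog hlt : a < b generalizing a b
  · exact this hb ha hne.symm hpar.symm hvab.symm (by omega)
  refine ⟨(b - a) / 2, by omega, by omega, fun j => v (a + j), ?_⟩
  have hclosed : v (a + 2 * ((b - a) / 2)) = v (a + 0) := by
    rw [show a + 2 * ((b - a) / 2) = b by omega, Nat.add_zero, hvab]
  have hedge (j : ℕ) (hj : j < 2 * ((b - a) / 2)) :
      ({v (a + j), v (a + (j + 1))} : Multiset S) ∈ if (a + j) % 2 = 0 then X else Y :=
    hv.2 (a + j) (by omega)
  rcases Nat.mod_two_eq_zero_or_one a with ha2 | ha2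
  · refine .inl ⟨hclosed, fun j hj => ?_⟩
    have := hedge j hj
    split_ifs at this ⊢ <;> first | exact this | omega
  · refine .inr ⟨hclosed, fun j hj => ?_⟩
    have := hedge j hj
    split_ifs at this ⊢ <;> first | exact this | omega

theorem AltClosedWalk.false_of_parity_injective [DecidableEq S] {E : Finset (Multiset S)}
    (hdisj : Disjoint X Y) (hXYE : X ∪ Y ⊆ E)
    (hNoEven : ∀ (n : ℕ) (v : ℕ → S), n % 2 = 0 → ¬ IsCycleOn E n v)
    (hOdd : ∀ (n n' : ℕ) (v v' : ℕ → S), n % 2 = 1 → n' % 2 = 1 →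
      IsCycleOn E n v → IsCycleOn E n' v' → cycleEdges n v = cycleEdges n' v')
    (hm : 0 < m) (hv : AltClosedWalk X Y m v)
    (hinj : ∀ a < 2 * m, ∀ b < 2 * m, a % 2 = b % 2 → v a = v b → a = b) : False := by
  have hE : cycleEdges (2 * m) v ⊆ E := hv.cycleEdges_subset.trans (Finset.coe_subset.2 hXYE)
  obtain ⟨i, g, hg, hig, hclosed, hdist⟩ := exists_simple_closed_subwalk (by omega) hv.1
  have hg2 : g ≠ 2 := by
    rintro rfl
    have := hv.mod_two_eq_of_edge_eq hdisj (p := i) (q := i + 1) (by omega) (by omega)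
      (by rw [hclosed]; exact Multiset.pair_comm _ _)
    omega
  have hC : IsCycleOn E g (fun k => v (i + k)) :=
    isCycleOn_subwalk (by omega) hdist hclosed ((cycleEdges_subwalk_subset hig).trans hE)
  have hgodd : g % 2 = 1 := by
    by_contra h
    exact hNoEven g _ (by omega) hC
  obtain ⟨n', u, hn', hC', hsub⟩ := exists_odd_cycle_of_closed_walk (by omega)
    (shortcut_closed hv.1 hclosed hig) ((cycleEdges_shortcut_subset hclosed hig).trans hE)
  have hlast : ({v (i + (g - 1)), v (i + g)} : Multiset S) ∈ cycleEdges n' u := by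
    rw [← hOdd g n' _ u hgodd hn' hC hC']
    exact ⟨g - 1, by omega, by rw [Nat.sub_add_cancel hg]⟩
  obtain ⟨q, hq, hqout, hedge⟩ := mem_cycleEdges_shortcut hclosed hig (hsub hlast)
  have hpar := hv.mod_two_eq_of_edge_eq hdisj (p := i + (g - 1)) (by omega) hq
    (by rw [show i + (g - 1) + 1 = i + g by omega]; exact hedge)
  rcases Multiset.pair_eq_pair_iff.1 hedge with ⟨h, -⟩ | ⟨-, h⟩
  · have := hinj _ (by omega) q hq hpar h
    omega
  · have := hinj q hq i (by omega) (by omega) (h.symm.trans hclosed)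
    omega

theorem not_isAltClosedWalk [DecidableEq S] (hdisj : Disjoint X Y)
    (hNoEven : ∀ (n : ℕ) (v : ℕ → S), n % 2 = 0 → ¬ IsCycleOn (X ∪ Y) n v)
    (hOdd : ∀ (n n' : ℕ) (v v' : ℕ → S), n % 2 = 1 → n' % 2 = 1 →
      IsCycleOn (X ∪ Y) n v → IsCycleOn (X ∪ Y) n' v' → cycleEdges n v = cycleEdges n' v') :
    ¬ IsAltClosedWalk X Y := by
  rintro ⟨m, hm, v, hv⟩
  replace hv : AltClosedWalk X Y m v ∨ AltClosedWalk Y X m v := .inl hv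
  induction m using Nat.strong_induction_on generalizing v with
  | _ m ih =>
  -- a shortest alternating closed walk visits no vertex twice at even distance
  by_cases hinj : ∀ a < 2 * m, ∀ b < 2 * m, a % 2 = b % 2 → v a = v b → a = b
  · rcases hv with hv | hv
    · exact hv.false_of_parity_injective hdisj subset_rfl hNoEven hOdd hm hinj
    · exact hv.false_of_parity_injective hdisj.symm (Finset.union_comm Y X).le hNoEven hOdd hm hinj
  · push Not at hinj
    obtain ⟨a, ha, b, hb, hpar, hvab, hne⟩ := hinj
    have hshorter :
        ∃ k, 0 < k ∧ k < m ∧ ∃ u, AltClosedWalk X Y k u ∨ AltClosedWalk Y X k u := by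
      rcases hv with hv | hv
      · exact hv.exists_shorter ha hb hne hpar hvab
      · obtain ⟨k, hk, hkm, u, hu⟩ := hv.exists_shorter ha hb hne hpar hvab
        exact ⟨k, hk, hkm, u, hu.symm⟩
    obtain ⟨k, hk, hkm, u, hu⟩ := hshorter
    exact ih k hkm hk u hu

end AlternatingWalks

theorem stmt_15_general (S : Type*) [DecidableEq S] :
    (∀ (X Y : Finset (Multiset S)) (n : ℕ) (v : ℕ → S), 4 ≤ n → n % 2 = 0 →
      (∀ i < n, ∀ j < n, v i = v j → i = j) → v n = v 0 →
      (∀ i < n, ({v i, v (i + 1)} : Multiset S) ∈ (if i % 2 = 0 then X else Y)) →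
      IsAltClosedWalk X Y) ∧
    (∀ X Y : Finset (Multiset S), Disjoint X Y →
      (∀ e ∈ X ∪ Y, Multiset.card e = 2) →
      -- connectedness
      (∀ a b : S, (∃ e ∈ X ∪ Y, a ∈ e) → (∃ e ∈ X ∪ Y, b ∈ e) →
        ∃ (n : ℕ) (w : ℕ → S), w 0 = a ∧ w n = b ∧
          ∀ i < n, ({w i, w (i + 1)} : Multiset S) ∈ X ∪ Y) →
      -- minimum degree at least two, loops counted twice
      (∀ s : S, (∃ e ∈ X ∪ Y, s ∈ e) →
        2 ≤ ∑ e ∈ X ∪ Y, Multiset.count s e) →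
      -- no even cycle
      (∀ (n : ℕ) (v : ℕ → S), n % 2 = 0 → ¬ IsCycleOn (X ∪ Y) n v) →
      -- at most one odd cycle
      (∀ (n n' : ℕ) (v v' : ℕ → S), n % 2 = 1 → n' % 2 = 1 →
        IsCycleOn (X ∪ Y) n v → IsCycleOn (X ∪ Y) n' v' →
        cycleEdges n v = cycleEdges n' v') →
      ¬ IsAltClosedWalk X Y) := by
  refine ⟨fun X Y n v h4 heven _ hclosed hcol => ?_,
    fun X Y hdisj _ _ _ hNoEven hOdd => not_isAltClosedWalk hdisj hNoEven hOdd⟩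
  refine ⟨n / 2, by omega, v, ?_, fun i hi => hcol i (by omega)⟩
  rwa [Nat.mul_div_cancel' (Nat.dvd_of_mod_eq_zero heven)]

/-- (1) a single even cycle of length `n ≥ 4` whose edges
alternate in colour is itself an alternating closed walk; (2) a connected
two-coloured multigraph with minimum degree ≥ 2 (loops counted twice), no even
cycle and at most one odd cycle has no alternating closed walk. -/
theorem stmt_15 (S : Type*) [Fintype S] [DecidableEq S] :
    (∀ (X Y : Finset (Multiset S)) (n : ℕ) (v : ℕ → S), 4 ≤ n → n % 2 = 0 →
      (∀ i < n, ∀ j < n, v i = v j → i = j) → v n = v 0 →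
      (∀ i < n, ({v i, v (i + 1)} : Multiset S) ∈ (if i % 2 = 0 then X else Y)) →
      IsAltClosedWalk X Y) ∧
    (∀ X Y : Finset (Multiset S), Disjoint X Y →
      (∀ e ∈ X ∪ Y, Multiset.card e = 2) →
      -- connectedness
      (∀ a b : S, (∃ e ∈ X ∪ Y, a ∈ e) → (∃ e ∈ X ∪ Y, b ∈ e) →
        ∃ (n : ℕ) (w : ℕ → S), w 0 = a ∧ w n = b ∧
          ∀ i < n, ({w i, w (i + 1)} : Multiset S) ∈ X ∪ Y) →
      -- minimum degree at least two, loops counted twice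
      (∀ s : S, (∃ e ∈ X ∪ Y, s ∈ e) →
        2 ≤ ∑ e ∈ X ∪ Y, Multiset.count s e) →
      -- no even cycle
      (∀ (n : ℕ) (v : ℕ → S), n % 2 = 0 → ¬ IsCycleOn (X ∪ Y) n v) →
      -- at most one odd cycle
      (∀ (n n' : ℕ) (v v' : ℕ → S), n % 2 = 1 → n' % 2 = 1 →
        IsCycleOn (X ∪ Y) n v → IsCycleOn (X ∪ Y) n' v' →
        cycleEdges n v = cycleEdges n' v') →
      ¬ IsAltClosedWalk X Y) :=
  stmt_15_general S
end

section
/- Let G be a two-colored graph consisting of two vertex-disjoint odd cycles C' and C joined by a simple path P from a vertex of C' to a vertex of C (a dumbbell graph), colored so that at each vertex of degree 2 the incident edges have different colors, and at the junction vertices edges on the same cycle may share colors appropriately (a 'good colouring'). Then G admits an alternating closed walk that traverses each cycle once and the path P twice. -/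
/-!
Go once around `C'`, out along `P`, once around `C` and back along `P`. Inside each piece the
colours alternate by the good-colouring condition at degree-2 vertices. At a junction the two
cycle edges share the colour opposite to the path edge, so leaving a cycle into the path (or
entering it) also alternates. Walking `P` backwards preserves alternation because, for two
disjoint colour classes covering both edges, `e ∈ X ↔ f ∈ Y` is symmetric in `e` and `f`.
-/

theorem Multiset.map_range_reflect (n : ℕ) :
    (Multiset.range n).map (fun j => n - 1 - j) = Multiset.range n := by
  have h := List.reverse_range' (s := 0) (n := n)
  simp only [zero_add, ← List.range_eq_range'] at h
  rw [Multiset.range, Multiset.map_coe, ← h, Multiset.coe_reverse]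

theorem Finset.mem_iff_mem_comm_of_disjoint {α : Type*} [DecidableEq α] {X Y : Finset α}
    (hXY : Disjoint X Y) {e f : α} (he : e ∈ X ∪ Y) (hf : f ∈ X ∪ Y) (h : e ∈ X ↔ f ∈ Y) :
    f ∈ X ↔ e ∈ Y := by
  rw [Finset.mem_union] at he hf
  have hdisj := Finset.disjoint_left.mp hXY
  constructor
  · intro hfX
    exact he.resolve_left fun heX => hdisj hfX (h.mp heX)
  · intro heY
    exact hf.resolve_right fun hfY => hdisj (h.mpr hfY) heY

namespace VertexSeq

variable {S : Type*}

def edge (w : ℕ → S) (i : ℕ) : Multiset S := {w i, w (i + 1)}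

def append (w₁ : ℕ → S) (n : ℕ) (w₂ : ℕ → S) : ℕ → S :=
  fun i => if i < n then w₁ i else w₂ (i - n)

def reverse (w : ℕ → S) (n : ℕ) : ℕ → S := fun i => w (n - i)

variable {w w₁ w₂ c' p c : ℕ → S} {n m i a ℓ b : ℕ}

theorem edge_sub_one (hn : 1 ≤ n) : edge w (n - 1) = {w (n - 1), w n} := by
  rw [edge, Nat.sub_add_cancel hn]

theorem append_apply_of_lt (hi : i < n) : append w₁ n w₂ i = w₁ i := if_pos hi

theorem append_apply_add : append w₁ n w₂ (n + i) = w₂ i := by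
  simp [append]

theorem append_apply_self : append w₁ n w₂ n = w₂ 0 := by
  simp [append]

theorem edge_append_of_lt (hw : w₁ n = w₂ 0) (hi : i < n) :
    edge (append w₁ n w₂) i = edge w₁ i := by
  rcases Nat.lt_or_ge (i + 1) n with h | h
  · simp only [edge, append_apply_of_lt hi, append_apply_of_lt h]
  · obtain rfl : i + 1 = n := by omega
    rw [edge, edge, append_apply_of_lt hi, append_apply_self, hw]

theorem edge_append_add : edge (append w₁ n w₂) (n + i) = edge w₂ i := by
  rw [edge, edge, append_apply_add, add_assoc, append_apply_add]

theorem edge_append_self : edge (append w₁ n w₂) n = edge w₂ 0 :=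
  edge_append_add (i := 0)

theorem map_edge_append (hw : w₁ n = w₂ 0) :
    (Multiset.range (n + m)).map (edge (append w₁ n w₂)) =
      (Multiset.range n).map (edge w₁) + (Multiset.range m).map (edge w₂) := by
  rw [Multiset.range_add, Multiset.map_add, Multiset.map_map]
  congr 1
  · exact Multiset.map_congr rfl fun i hi => edge_append_of_lt hw (Multiset.mem_range.mp hi)
  · exact Multiset.map_congr rfl fun i _ => edge_append_add

theorem edge_reverse (hi : i < n) : edge (reverse w n) i = edge w (n - 1 - i) := by
  rw [edge, edge, reverse, reverse, Multiset.pair_comm, show n - 1 - i + 1 = n - i by omega,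
    show n - (i + 1) = n - 1 - i by omega]

theorem map_edge_reverse :
    (Multiset.range n).map (edge (reverse w n)) = (Multiset.range n).map (edge w) := by
  calc (Multiset.range n).map (edge (reverse w n))
      = (Multiset.range n).map (edge w ∘ fun i => n - 1 - i) :=
        Multiset.map_congr rfl fun i hi => edge_reverse (Multiset.mem_range.mp hi)
    _ = (Multiset.range n).map (edge w) := by
        rw [← Multiset.map_map, Multiset.map_range_reflect]

def dumbbellWalk (c' : ℕ → S) (a : ℕ) (p : ℕ → S) (ℓ : ℕ) (c : ℕ → S) (b : ℕ) : ℕ → S :=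
  append c' a (append p ℓ (append c b (reverse p ℓ)))

theorem dumbbellWalk_zero (ha : 0 < a) : dumbbellWalk c' a p ℓ c b 0 = c' 0 :=
  append_apply_of_lt ha

theorem dumbbellWalk_length : dumbbellWalk c' a p ℓ c b (a + (ℓ + (b + ℓ))) = p 0 := by
  rw [dumbbellWalk, append_apply_add, append_apply_add, append_apply_add, reverse, Nat.sub_self]

theorem edge_dumbbellWalk_zero (ha : 0 < a) (hℓ : 0 < ℓ) (hc'p : c' a = p 0) :
    edge (dumbbellWalk c' a p ℓ c b) 0 = edge c' 0 :=
  edge_append_of_lt (by rwa [append_apply_of_lt hℓ]) ha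

theorem edge_dumbbellWalk_last (hℓ : 0 < ℓ) :
    edge (dumbbellWalk c' a p ℓ c b) (a + (ℓ + (b + (ℓ - 1)))) = edge p 0 := by
  rw [dumbbellWalk, edge_append_add, edge_append_add, edge_append_add, edge_reverse (by omega),
    Nat.sub_self]

theorem map_edge_dumbbellWalk (hℓ : 0 < ℓ) (hb : 0 < b)
    (hc'p : c' a = p 0) (hpc : p ℓ = c 0) (hcp : c b = p ℓ) :
    (Multiset.range (a + (ℓ + (b + ℓ)))).map (edge (dumbbellWalk c' a p ℓ c b)) =
      (Multiset.range a).map (edge c') + (Multiset.range b).map (edge c) +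
        2 • (Multiset.range ℓ).map (edge p) := by
  rw [dumbbellWalk, map_edge_append (by rwa [append_apply_of_lt hℓ]),
    map_edge_append (by rwa [append_apply_of_lt hb]),
    map_edge_append (by rwa [reverse, Nat.sub_zero]), map_edge_reverse, two_nsmul]
  abel

section Alternating

variable [DecidableEq S] {X Y : Finset (Multiset S)}

variable (X Y) in
structure IsAlternating (w : ℕ → S) (n : ℕ) : Prop where
  mem_union : ∀ i < n, edge w i ∈ X ∪ Y
  alternates : ∀ i, i + 1 < n → (edge w i ∈ X ↔ edge w (i + 1) ∈ Y)

theorem IsAlternating.append (h₁ : IsAlternating X Y w₁ n) (h₂ : IsAlternating X Y w₂ m)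
    (hw : w₁ n = w₂ 0) (hjunc : edge w₁ (n - 1) ∈ X ↔ edge w₂ 0 ∈ Y) :
    IsAlternating X Y (append w₁ n w₂) (n + m) where
  mem_union i hi := by
    rcases Nat.lt_or_ge i n with h | h
    · rw [edge_append_of_lt hw h]
      exact h₁.mem_union i h
    · obtain ⟨j, rfl⟩ := Nat.exists_eq_add_of_le h
      rw [edge_append_add]
      exact h₂.mem_union j (by omega)
  alternates i hi := by
    rcases Nat.lt_or_ge (i + 1) n with h | h
    · rw [edge_append_of_lt hw (by omega), edge_append_of_lt hw h]
      exact h₁.alternates i h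
    obtain rfl | h := h.eq_or_lt
    · rw [edge_append_of_lt hw (Nat.lt_add_one i), edge_append_self]
      exact hjunc
    · obtain ⟨j, rfl⟩ := Nat.exists_eq_add_of_le (Nat.le_of_lt_succ h)
      rw [add_assoc, edge_append_add, edge_append_add]
      exact h₂.alternates j (by omega)

theorem IsAlternating.reverse (hXY : Disjoint X Y) (h : IsAlternating X Y w n) :
    IsAlternating X Y (reverse w n) n where
  mem_union i hi := by
    rw [edge_reverse hi]
    exact h.mem_union _ (by omega)
  alternates i hi := by
    rw [edge_reverse (by omega), edge_reverse hi, show n - 1 - i = n - 1 - (i + 1) + 1 by omega]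
    exact Finset.mem_iff_mem_comm_of_disjoint hXY (h.mem_union _ (by omega))
      (h.mem_union _ (by omega)) (h.alternates _ (by omega))

theorem isAlternating_dumbbellWalk (hXY : Disjoint X Y) (ha : 0 < a) (hℓ : 0 < ℓ) (hb : 0 < b)
    (hc'p : c' a = p 0) (hpc : p ℓ = c 0) (hcp : c b = p ℓ)
    (hc' : IsAlternating X Y c' a) (hp : IsAlternating X Y p ℓ) (hc : IsAlternating X Y c b)
    (hc'junc : edge c' (a - 1) ∈ X ↔ edge c' 0 ∈ X) (hcjunc : edge c (b - 1) ∈ X ↔ edge c 0 ∈ X)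
    (hjunc1 : edge p 0 ∈ X ↔ edge c' 0 ∈ Y) (hjunc2 : edge p (ℓ - 1) ∈ X ↔ edge c 0 ∈ Y) :
    IsAlternating X Y (dumbbellWalk c' a p ℓ c b) (a + (ℓ + (b + ℓ))) := by
  refine hc'.append (hp.append (hc.append (hp.reverse hXY) ?_ ?_) ?_ ?_) ?_ ?_
  · rwa [reverse, Nat.sub_zero]
  · rw [hcjunc, edge_reverse hℓ, Nat.sub_zero]
    exact Finset.mem_iff_mem_comm_of_disjoint hXY (hp.mem_union _ (by omega)) (hc.mem_union 0 hb)
      hjunc2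
  · rwa [append_apply_of_lt hb]
  · rwa [edge_append_of_lt (by rwa [reverse, Nat.sub_zero]) hb]
  · rwa [append_apply_of_lt hℓ]
  · rw [edge_append_of_lt (by rwa [append_apply_of_lt hb]) hℓ, hc'junc]
    exact Finset.mem_iff_mem_comm_of_disjoint hXY (hp.mem_union 0 hℓ) (hc'.mem_union 0 ha)
      hjunc1

end Alternating

end VertexSeq

theorem stmt_16_general (S : Type*) [DecidableEq S]
    (X Y : Finset (Multiset S)) (hXY : Disjoint X Y)
    (a b ℓ : ℕ) (ha1 : 1 ≤ a) (hb1 : 1 ≤ b) (hl1 : 1 ≤ ℓ)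
    (c' c p : ℕ → S)
    -- `c'` is a cycle of length `a`, `c` a cycle of length `b`
    (hc'cl : c' a = c' 0) (hccl : c b = c 0)
    -- `p` is a simple path of length `ℓ` from `c' 0` to `c 0`
    (hp0 : p 0 = c' 0) (hpl : p ℓ = c 0)
    -- all edges of the dumbbell are coloured
    (hc'mem : ∀ i < a, ({c' i, c' (i + 1)} : Multiset S) ∈ X ∪ Y)
    (hcmem : ∀ i < b, ({c i, c (i + 1)} : Multiset S) ∈ X ∪ Y)
    (hpmem : ∀ j < ℓ, ({p j, p (j + 1)} : Multiset S) ∈ X ∪ Y)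
    -- good colouring: alternation at every degree-2 vertex
    (hc'alt : ∀ i, i + 1 < a →
      (({c' i, c' (i + 1)} : Multiset S) ∈ X ↔ ({c' (i + 1), c' (i + 2)} : Multiset S) ∈ Y))
    (hcalt : ∀ i, i + 1 < b →
      (({c i, c (i + 1)} : Multiset S) ∈ X ↔ ({c (i + 1), c (i + 2)} : Multiset S) ∈ Y))
    (hpalt : ∀ j, j + 1 < ℓ →
      (({p j, p (j + 1)} : Multiset S) ∈ X ↔ ({p (j + 1), p (j + 2)} : Multiset S) ∈ Y))
    -- good colouring: the two cycle edges at each junction share a colour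
    (hc'junc : (({c' (a - 1), c' a} : Multiset S) ∈ X ↔ ({c' 0, c' 1} : Multiset S) ∈ X))
    (hcjunc : (({c (b - 1), c b} : Multiset S) ∈ X ↔ ({c 0, c 1} : Multiset S) ∈ X))
    -- good colouring: path edges at the junctions differ in colour from the cycle edges there
    (hjunc1 : (({p 0, p 1} : Multiset S) ∈ X ↔ ({c' 0, c' 1} : Multiset S) ∈ Y))
    (hjunc2 : (({p (ℓ - 1), p ℓ} : Multiset S) ∈ X ↔ ({c 0, c 1} : Multiset S) ∈ Y)) :
    ∃ v : ℕ → S,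
      v (a + b + 2 * ℓ) = v 0 ∧
      (∀ i < a + b + 2 * ℓ, ({v i, v (i + 1)} : Multiset S) ∈ X ∪ Y) ∧
      (∀ i, i + 1 < a + b + 2 * ℓ →
        (({v i, v (i + 1)} : Multiset S) ∈ X ↔ ({v (i + 1), v (i + 2)} : Multiset S) ∈ Y)) ∧
      (({v (a + b + 2 * ℓ - 1), v (a + b + 2 * ℓ)} : Multiset S) ∈ X ↔
        ({v 0, v 1} : Multiset S) ∈ Y) ∧
      (Multiset.range (a + b + 2 * ℓ)).map (fun i => ({v i, v (i + 1)} : Multiset S)) =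
        (Multiset.range a).map (fun i => ({c' i, c' (i + 1)} : Multiset S)) +
        (Multiset.range b).map (fun i => ({c i, c (i + 1)} : Multiset S)) +
        2 • (Multiset.range ℓ).map (fun j => ({p j, p (j + 1)} : Multiset S)) := by
  open VertexSeq in
  have hN : a + b + 2 * ℓ = a + (ℓ + (b + ℓ)) := by ring
  have hc'p : c' a = p 0 := hc'cl.trans hp0.symm
  have hcp : c b = p ℓ := hccl.trans hpl.symm
  rw [← edge_sub_one (w := c') ha1] at hc'junc
  rw [← edge_sub_one (w := c) hb1] at hcjunc
  rw [← edge_sub_one (w := p) hl1] at hjunc2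
  have hw := isAlternating_dumbbellWalk hXY ha1 hl1 hb1 hc'p hpl hcp ⟨hc'mem, hc'alt⟩
    ⟨hpmem, hpalt⟩ ⟨hcmem, hcalt⟩ hc'junc hcjunc hjunc1 hjunc2
  refine ⟨dumbbellWalk c' a p ℓ c b, ?_, hN ▸ hw.mem_union, hN ▸ hw.alternates, ?_,
    hN ▸ map_edge_dumbbellWalk hl1 hb1 hc'p hpl hcp⟩
  · rw [hN, dumbbellWalk_length, dumbbellWalk_zero ha1, hp0]
  · rw [← edge_sub_one (by omega), hN,
      show a + (ℓ + (b + ℓ)) - 1 = a + (ℓ + (b + (ℓ - 1))) by omega, edge_dumbbellWalk_last hl1,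
      ← edge, edge_dumbbellWalk_zero ha1 hl1 hc'p]
    exact hjunc1

/-- a good colouring of a dumbbell graph (two vertex-disjoint odd
cycles `C'`, `C` joined by a simple path `P`) admits an alternating closed walk
traversing each cycle once and the path twice.  Edges are size-2 multisets;
`X` and `Y` are the two colour classes.  The good colouring conditions say that
edges alternate along each cycle and along the path except that the two cycle
edges at each junction share a colour, which differs from that of the incident
path edge. -/
theorem stmt_16 (S : Type*) [DecidableEq S]
    (X Y : Finset (Multiset S)) (hXY : Disjoint X Y)
    (a b ℓ : ℕ) (ha1 : 1 ≤ a) (hb1 : 1 ≤ b) (hl1 : 1 ≤ ℓ)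
    (haodd : a % 2 = 1) (hbodd : b % 2 = 1)
    (c' c p : ℕ → S)
    -- `c'` is a cycle of length `a`, `c` a cycle of length `b`
    (hc'cl : c' a = c' 0) (hccl : c b = c 0)
    (hc'inj : ∀ i < a, ∀ j < a, c' i = c' j → i = j)
    (hcinj : ∀ i < b, ∀ j < b, c i = c j → i = j)
    -- `p` is a simple path of length `ℓ` from `c' 0` to `c 0`
    (hp0 : p 0 = c' 0) (hpl : p ℓ = c 0)
    (hpinj : ∀ i ≤ ℓ, ∀ j ≤ ℓ, p i = p j → i = j)
    -- the two cycles are vertex-disjoint, and the interior of the path avoids both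
    (hdisj : ∀ i < a, ∀ j < b, c' i ≠ c j)
    (hpint : ∀ j, 0 < j → j < ℓ →
      (∀ i < a, p j ≠ c' i) ∧ (∀ i < b, p j ≠ c i))
    -- all edges of the dumbbell are coloured
    (hc'mem : ∀ i < a, ({c' i, c' (i + 1)} : Multiset S) ∈ X ∪ Y)
    (hcmem : ∀ i < b, ({c i, c (i + 1)} : Multiset S) ∈ X ∪ Y)
    (hpmem : ∀ j < ℓ, ({p j, p (j + 1)} : Multiset S) ∈ X ∪ Y)
    -- good colouring: alternation at every degree-2 vertex
    (hc'alt : ∀ i, i + 1 < a →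
      (({c' i, c' (i + 1)} : Multiset S) ∈ X ↔ ({c' (i + 1), c' (i + 2)} : Multiset S) ∈ Y))
    (hcalt : ∀ i, i + 1 < b →
      (({c i, c (i + 1)} : Multiset S) ∈ X ↔ ({c (i + 1), c (i + 2)} : Multiset S) ∈ Y))
    (hpalt : ∀ j, j + 1 < ℓ →
      (({p j, p (j + 1)} : Multiset S) ∈ X ↔ ({p (j + 1), p (j + 2)} : Multiset S) ∈ Y))
    -- good colouring: the two cycle edges at each junction share a colour
    (hc'junc : (({c' (a - 1), c' a} : Multiset S) ∈ X ↔ ({c' 0, c' 1} : Multiset S) ∈ X))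
    (hcjunc : (({c (b - 1), c b} : Multiset S) ∈ X ↔ ({c 0, c 1} : Multiset S) ∈ X))
    -- good colouring: path edges at the junctions differ in colour from the cycle edges there
    (hjunc1 : (({p 0, p 1} : Multiset S) ∈ X ↔ ({c' 0, c' 1} : Multiset S) ∈ Y))
    (hjunc2 : (({p (ℓ - 1), p ℓ} : Multiset S) ∈ X ↔ ({c 0, c 1} : Multiset S) ∈ Y)) :
    ∃ v : ℕ → S,
      v (a + b + 2 * ℓ) = v 0 ∧
      (∀ i < a + b + 2 * ℓ, ({v i, v (i + 1)} : Multiset S) ∈ X ∪ Y) ∧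
      (∀ i, i + 1 < a + b + 2 * ℓ →
        (({v i, v (i + 1)} : Multiset S) ∈ X ↔ ({v (i + 1), v (i + 2)} : Multiset S) ∈ Y)) ∧
      (({v (a + b + 2 * ℓ - 1), v (a + b + 2 * ℓ)} : Multiset S) ∈ X ↔
        ({v 0, v 1} : Multiset S) ∈ Y) ∧
      (Multiset.range (a + b + 2 * ℓ)).map (fun i => ({v i, v (i + 1)} : Multiset S)) =
        (Multiset.range a).map (fun i => ({c' i, c' (i + 1)} : Multiset S)) +
        (Multiset.range b).map (fun i => ({c i, c (i + 1)} : Multiset S)) +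
        2 • (Multiset.range ℓ).map (fun j => ({p j, p (j + 1)} : Multiset S)) :=
  stmt_16_general S X Y hXY a b ℓ ha1 hb1 hl1 c' c p hc'cl hccl hp0 hpl hc'mem hcmem hpmem hc'alt
    hcalt hpalt hc'junc hcjunc hjunc1 hjunc2
end

section
/- Let v ∈ ℝ^{k−1} and let u_1, ..., u_k ∈ ℝ^{k−1} be vectors (rays emanating from v) such that for each i, the reflection −u_i lies in the convex cone generated by {u_j : j ≠ i}. Then the closed cones K_i = v + cone({u_j : j ≠ i}) cover ℝ^{k−1}: every point of ℝ^{k−1} lies in some K_i, provided u_1, ..., u_k positively span ℝ^{k−1}. -/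
/-!
Write `x - v = ∑ cⱼ uⱼ` with `c ≥ 0`. Moving `-uᵢ` to the other side of its cone
representation gives a nonnegative relation `∑ eⱼ uⱼ = 0` with `eᵢ > 0`. Subtracting the
largest multiple `t • e` that keeps `c - t • e` nonnegative changes nothing in the sum
and makes one coefficient vanish, so `x` lies in the corresponding cone `K_j`.
-/

open Finset

section ConeRepr

variable {ι 𝕜 M : Type*} [Fintype ι] [Field 𝕜] [LinearOrder 𝕜] [IsStrictOrderedRing 𝕜]
  [AddCommGroup M] [Module 𝕜 M]

theorem exists_nonneg_sub_smul_apply_eq_zero {c e : ι → 𝕜} (hc : 0 ≤ c) (he : 0 ≤ e)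
    {i : ι} (hi : 0 < e i) : ∃ (t : 𝕜) (j : ι), 0 ≤ c - t • e ∧ (c - t • e) j = 0 := by
  classical
  obtain ⟨j, hj, hmin⟩ :=
    (univ.filter fun j => 0 < e j).exists_min_image (fun j => c j / e j) ⟨i, by simpa⟩
  simp only [mem_filter, mem_univ, true_and] at hj hmin
  refine ⟨c j / e j, j, fun l => ?_, by simp [hj.ne']⟩
  simp only [Pi.zero_apply, Pi.sub_apply, Pi.smul_apply, smul_eq_mul, sub_nonneg]
  rcases (he l).eq_or_lt with hl | hl
  · simpa [← hl] using hc l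
  · exact (le_div_iff₀ hl).mp (hmin l hl)

theorem exists_nonneg_dependence_of_neg_eq_sum {u : ι → M} {d : ι → 𝕜} (hd : 0 ≤ d) {i : ι}
    (hneg : -u i = ∑ j, d j • u j) : ∃ e : ι → 𝕜, 0 ≤ e ∧ 0 < e i ∧ ∑ j, e j • u j = 0 := by
  classical
  refine ⟨d + Pi.single i 1, add_nonneg hd (Pi.single_nonneg.mpr zero_le_one), ?_, ?_⟩
  · simpa using add_pos_of_nonneg_of_pos (hd i) one_pos
  · simp [add_smul, sum_add_distrib, Pi.single_apply, ← hneg]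

theorem exists_nonneg_repr_apply_eq_zero {u : ι → M} {c e : ι → 𝕜} (hc : 0 ≤ c) (he : 0 ≤ e)
    {i : ι} (hi : 0 < e i) (hdep : ∑ j, e j • u j = 0) :
    ∃ (j : ι) (c' : ι → 𝕜), 0 ≤ c' ∧ c' j = 0 ∧ ∑ l, c' l • u l = ∑ l, c l • u l := by
  obtain ⟨t, j, hnonneg, hj⟩ := exists_nonneg_sub_smul_apply_eq_zero hc he hi
  refine ⟨j, c - t • e, hnonneg, hj, ?_⟩
  simp [sub_smul, mul_smul, sum_sub_distrib, ← smul_sum, hdep]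

end ConeRepr

/-- if rays `u₁, …, u_k` from a point `v` of ℝ^(k-1) are such that
each `-uᵢ` lies in the cone generated by the other rays, and the rays positively
span ℝ^(k-1), then the cones `K_i = v + cone {u_j : j ≠ i}` cover ℝ^(k-1). -/
theorem stmt_19 (k : ℕ) (hk : 2 ≤ k)
    (v : Fin (k - 1) → ℝ) (u : Fin k → (Fin (k - 1) → ℝ))
    (hrefl : ∀ i : Fin k, ∃ c : Fin k → ℝ,
      (∀ j, 0 ≤ c j) ∧ c i = 0 ∧ -u i = ∑ j, c j • u j)
    (hspan : ∀ x : Fin (k - 1) → ℝ, ∃ c : Fin k → ℝ,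
      (∀ j, 0 ≤ c j) ∧ x = ∑ j, c j • u j) :
    ∀ x : Fin (k - 1) → ℝ, ∃ (i : Fin k) (c : Fin k → ℝ),
      (∀ j, 0 ≤ c j) ∧ c i = 0 ∧ x = v + ∑ j, c j • u j := by
  intro x
  obtain ⟨d, hd, -, hneg⟩ := hrefl ⟨0, by omega⟩
  obtain ⟨e, he, hei, hdep⟩ := exists_nonneg_dependence_of_neg_eq_sum hd hneg
  obtain ⟨c, hc, hx⟩ := hspan (x - v)
  obtain ⟨j, c', hc', hc'j, hsum⟩ := exists_nonneg_repr_apply_eq_zero hc he hei hdep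
  exact ⟨j, c', hc', hc'j, by rw [hsum, ← hx, add_sub_cancel]⟩
end
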